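/- arXiv:1111.5241 — 18 statements merged into one kernel-verified Lean document; each statement's English description precedes it below -/
import Mathlib

section
/- For all positive reals a and b, the inequality (P6 + 6·P4)/7 ≤ (S + 3·G)/4 holds, where P6 = (a²+b²)/(a+b), P4 = 4ab/(√a+√b)², S = √((a²+b²)/2), and G = √(ab). -/
lemma key_aux (x y s : ℝ) (hx : 0 < x) (hy : 0 < y) (hs0 : 0 ≤ s)
    (hs : s^2 = ((x^2)^2 + (y^2)^2)/2) :
    (((x^2)^2+(y^2)^2)/(x^2+y^2) + 6*(4*x^2*y^2/(x+y)^2))/7 ≤ (s + 3*(x*y))/4 := by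
  have hD1 : (0:ℝ) < x^2+y^2 := by positivity
  have hD2 : (0:ℝ) < (x+y)^2 := by positivity
  set R : ℝ := 4*(x^4+y^4)*(x+y)^2 + 96*x^2*y^2*(x^2+y^2) - 21*(x*y)*((x^2+y^2)*(x+y)^2)
    with hR
  set L : ℝ := 7*s*((x^2+y^2)*(x+y)^2) with hL
  have hLnn : 0 ≤ L := by positivity
  have hL2 : L^2 = 49/2*(x^4+y^4)*((x^2+y^2)*(x+y)^2)^2 := by
    have : L^2 = 49*s^2*((x^2+y^2)*(x+y)^2)^2 := by ring
    rw [this, hs]; ring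
  have hsq : R^2 ≤ L^2 := by
    rw [hL2]
    nlinarith [mul_nonneg (mul_nonneg (pow_nonneg (sq_nonneg (x-y)) 2)
        (mul_nonneg hx.le hy.le)) (by positivity : (0:ℝ) ≤ x^6+y^6),
      mul_nonneg (mul_nonneg (pow_nonneg (sq_nonneg (x-y)) 2)
        (by positivity : (0:ℝ) ≤ x^3*y^3)) (by positivity : (0:ℝ) ≤ x^2+y^2),
      mul_nonneg (sq_nonneg (x-y)) (by positivity : (0:ℝ) ≤ x^10+y^10),
      mul_nonneg (mul_nonneg (sq_nonneg (x-y)) (mul_nonneg hx.le hy.le))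
        (by positivity : (0:ℝ) ≤ x^8+y^8),
      mul_nonneg (mul_nonneg (sq_nonneg (x-y)) (by positivity : (0:ℝ) ≤ x^3*y^3))
        (by positivity : (0:ℝ) ≤ x^4+y^4),
      mul_nonneg (sq_nonneg (x-y)) (by positivity : (0:ℝ) ≤ x^5*y^5)]
  have h7 : R ≤ L := by nlinarith [hsq, hLnn]
  have lhs_eq : ((x^2)^2+(y^2)^2)/(x^2+y^2) + 6*(4*x^2*y^2/(x+y)^2)
      = ((x^4+y^4)*(x+y)^2 + 24*x^2*y^2*(x^2+y^2))/((x^2+y^2)*(x+y)^2) := by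
    field_simp; ring
  rw [lhs_eq, div_le_div_iff₀ (by norm_num) (by norm_num : (0:ℝ) < 4),
    div_mul_eq_mul_div, div_le_iff₀ (by positivity)]
  nlinarith [h7]

theorem stmt_0 (a b : ℝ) (ha : 0 < a) (hb : 0 < b) :
    let P6 := (a^2+b^2)/(a+b)
    let P4 := 4*a*b/(Real.sqrt a + Real.sqrt b)^2
    let S := Real.sqrt ((a^2+b^2)/2)
    let G := Real.sqrt (a*b)
    (P6 + 6*P4)/7 ≤ (S + 3*G)/4 := by
  intro P6 P4 S G
  have hx : 0 < Real.sqrt a := Real.sqrt_pos.mpr ha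
  have hy : 0 < Real.sqrt b := Real.sqrt_pos.mpr hb
  have hxa : (Real.sqrt a)^2 = a := Real.sq_sqrt ha.le
  have hyb : (Real.sqrt b)^2 = b := Real.sq_sqrt hb.le
  have hs0 : 0 ≤ Real.sqrt ((a^2+b^2)/2) := Real.sqrt_nonneg _
  have hs : (Real.sqrt ((a^2+b^2)/2))^2 = (a^2+b^2)/2 :=
    Real.sq_sqrt (by positivity)
  have hg : Real.sqrt (a*b) = Real.sqrt a * Real.sqrt b := Real.sqrt_mul ha.le b
  show ((a^2+b^2)/(a+b) + 6*(4*a*b/(Real.sqrt a + Real.sqrt b)^2))/7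
      ≤ (Real.sqrt ((a^2+b^2)/2) + 3*Real.sqrt (a*b))/4
  rw [hg]
  have := key_aux (Real.sqrt a) (Real.sqrt b) (Real.sqrt ((a^2+b^2)/2)) hx hy hs0
    (by rw [hxa, hyb, hs])
  rw [hxa, hyb] at this
  exact this
end

section
/- For all positive reals a and b, 8·N2 − 5·G − 3·S ≥ 0, i.e. (S + 3·G)/4 ≤ (2·N2 + G)/3, where N2 = ((√a+√b)/2)·√((a+b)/2), G = √(ab), and S = √((a²+b²)/2). -/
theorem stmt_1 (a b : ℝ) (ha : 0 < a) (hb : 0 < b) :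
    let N2 := ((Real.sqrt a + Real.sqrt b)/2) * Real.sqrt ((a+b)/2)
    let G := Real.sqrt (a*b)
    let S := Real.sqrt ((a^2+b^2)/2)
    8*N2 - 5*G - 3*S ≥ 0 := by
  intro N2 G S
  set x := Real.sqrt a with hxdef
  set y := Real.sqrt b with hydef
  have hx : 0 < x := Real.sqrt_pos.mpr ha
  have hy : 0 < y := Real.sqrt_pos.mpr hb
  have hax : a = x^2 := (Real.sq_sqrt ha.le).symm
  have hby : b = y^2 := (Real.sq_sqrt hb.le).symm
  have hG : G = x * y := by
    show Real.sqrt (a*b) = x * y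
    rw [Real.sqrt_mul ha.le]
  set u := Real.sqrt ((a+b)/2) with hudef
  set v := Real.sqrt ((a^2+b^2)/2) with hvdef
  have hu0 : 0 ≤ u := Real.sqrt_nonneg _
  have hv0 : 0 ≤ v := Real.sqrt_nonneg _
  have hu2 : u^2 = (x^2+y^2)/2 := by
    rw [hudef, Real.sq_sqrt (by positivity), hax, hby]
  have hv2 : v^2 = (x^4+y^4)/2 := by
    rw [hvdef, Real.sq_sqrt (by positivity), hax, hby]; ring
  -- key polynomial inequality
  have hC0 : (0:ℝ) ≤ 7/2*(x^4+y^4) - 9*x^2*y^2 + 16*x*y*(x^2+y^2) := by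
    nlinarith [sq_nonneg (x^2-y^2), mul_pos hx hy, sq_nonneg (x-y), mul_pos (mul_pos hx hy) (mul_pos hx hy)]
  have hstep1 : 30*(x*y)*v ≤ 7/2*(x^4+y^4) - 9*x^2*y^2 + 16*x*y*(x^2+y^2) := by
    have h30 : 0 ≤ 30*(x*y)*v := by positivity
    have hsq : (30*(x*y)*v)^2 ≤ (7/2*(x^4+y^4) - 9*x^2*y^2 + 16*x*y*(x^2+y^2))^2 := by
      have hQ : (0:ℝ) ≤ (x-y)^4 * (49/4*(x^4+y^4) + 161*x*y*(x^2+y^2) + 627/2*x^2*y^2) := by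
        positivity
      have he : (30*(x*y)*v)^2 = 900*(x*y)^2*v^2 := by ring
      rw [he, hv2]
      nlinarith [hQ]
    exact (pow_le_pow_iff_left₀ h30 hC0 (by norm_num)).mp hsq
  have hmain : 5*G + 3*S ≤ 8*N2 := by
    have hL0 : 0 ≤ 5*G + 3*S := by
      rw [hG]; positivity
    have hR0 : 0 ≤ 8*N2 := by
      show 0 ≤ 8*(((x+y)/2)*u)
      positivity
    have hsq : (5*G + 3*S)^2 ≤ (8*N2)^2 := by
      have : (8*N2)^2 = 16*(x+y)^2*u^2 := by
        show (8*(((x+y)/2)*u))^2 = _; ring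
      rw [this, hu2, hG]
      show (5*(x*y) + 3*v)^2 ≤ _
      nlinarith [hstep1, hv2]
    exact (pow_le_pow_iff_left₀ hL0 hR0 (by norm_num)).mp hsq
  linarith
end

section
/- For all positive reals a and b, 4·N2 − 3·G − P6 ≥ 0, i.e. (P6 + 5·G)/6 ≤ (2·N2 + G)/3, where N2 = ((√a+√b)/2)·√((a+b)/2), G = √(ab), and P6 = (a²+b²)/(a+b). -/
theorem stmt_2 (a b : ℝ) (ha : 0 < a) (hb : 0 < b) :
    let N2 := ((Real.sqrt a + Real.sqrt b)/2) * Real.sqrt ((a+b)/2)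
    let G := Real.sqrt (a*b)
    let P6 := (a^2+b^2)/(a+b)
    4*N2 - 3*G - P6 ≥ 0 := by
  intro N2 G P6
  set x := Real.sqrt a with hxdef
  set y := Real.sqrt b with hydef
  set s := Real.sqrt ((a+b)/2) with hsdef
  have hx : 0 < x := Real.sqrt_pos.mpr ha
  have hy : 0 < y := Real.sqrt_pos.mpr hb
  have hx2 : x^2 = a := Real.sq_sqrt ha.le
  have hy2 : y^2 = b := Real.sq_sqrt hb.le
  have hs0 : 0 ≤ s := Real.sqrt_nonneg _
  have hs2 : s^2 = (a+b)/2 := Real.sq_sqrt (by positivity)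
  have hG : G = x*y := by
    rw [hxdef, hydef, ← Real.sqrt_mul ha.le]
  have hab : 0 < a + b := by linarith
  -- key polynomial inequality after squaring
  have hs2' : s^2 = (x^2+y^2)/2 := by rw [hs2, hx2, hy2]
  have key : (3*(x*y)*(x^2+y^2) + x^4+y^4)^2 ≤ (2*(x+y)*(x^2+y^2)*s)^2 := by
    have h1 : (2*(x+y)*(x^2+y^2)*s)^2 = 2*(x+y)^2*(x^2+y^2)^3 := by
      linear_combination (4*(x+y)^2*(x^2+y^2)^2) * hs2'
    rw [h1]
    have h2 : 2*(x+y)^2*(x^2+y^2)^3 - (3*(x*y)*(x^2+y^2) + x^4+y^4)^2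
        = (x-y)^4*(x^4+2*x^3*y+x^2*y^2+2*x*y^3+y^4) := by ring
    have h3 : 0 ≤ (x-y)^4*(x^4+2*x^3*y+x^2*y^2+2*x*y^3+y^4) :=
      mul_nonneg (by positivity)
        (by nlinarith [pow_pos hx 4, pow_pos hy 4, mul_pos (pow_pos hx 3) hy,
          mul_pos hx (pow_pos hy 3), mul_pos (pow_pos hx 2) (pow_pos hy 2)])
    linarith
  have hR : 0 ≤ 3*(x*y)*(x^2+y^2) + x^4+y^4 := by positivity
  have hL : 0 ≤ 2*(x+y)*(x^2+y^2)*s := by positivity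
  have hLR : 3*(x*y)*(x^2+y^2) + x^4+y^4 ≤ 2*(x+y)*(x^2+y^2)*s := by
    nlinarith [key, hR, hL]
  -- now conclude
  have hab2 : a + b = x^2 + y^2 := by rw [hx2, hy2]
  have hP6 : P6 = (x^4+y^4)/(x^2+y^2) := by
    show (a^2+b^2)/(a+b) = _
    rw [hab2, ← hx2, ← hy2]; ring_nf
  have hN2 : N2 = (x+y)/2 * s := rfl
  rw [hN2, hG, hP6]
  rw [ge_iff_le, ← sub_nonneg] at *
  have hxy2 : 0 < x^2 + y^2 := by positivity
  have : 4*((x+y)/2*s) - 3*(x*y) - (x^4+y^4)/(x^2+y^2)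
      = (2*(x+y)*(x^2+y^2)*s - (3*(x*y)*(x^2+y^2) + x^4+y^4))/(x^2+y^2) := by
    field_simp; ring
  rw [sub_zero, this]
  positivity
end

section
/- For all positive reals a and b, P4 + P6 − S ≤ (P6 + 2·P4)/3, equivalently 3·S ≥ 2·P6 + P4, where P4 = 4ab/(√a+√b)², P6 = (a²+b²)/(a+b), and S = √((a²+b²)/2). -/
/-!
Substituting `a = s²`, `b = t²` removes the square roots from `P4` and `P6`; after squaring,
`9 S² ≥ (2 P6 + P4)²` becomes a polynomial inequality in `s, t` whose difference of sides is
`(s - t)²` times a polynomial with nonnegative coefficients.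
-/

lemma mixed_mean_numerator_sq_le (s t : ℝ) (hs : 0 ≤ s) (ht : 0 ≤ t) :
    (4 * s^2 * t^2 * (s^2 + t^2) + 2 * (s^4 + t^4) * (s + t)^2) ^ 2 * 2
      ≤ 9 * (s^4 + t^4) * ((s + t)^2 * (s^2 + t^2)) ^ 2 := by
  have h : 9 * (s^4 + t^4) * ((s + t)^2 * (s^2 + t^2)) ^ 2
      - (4 * s^2 * t^2 * (s^2 + t^2) + 2 * (s^4 + t^4) * (s + t)^2) ^ 2 * 2
      = (s - t)^2 * (s^10 + 6*s^9*t + 3*s^8*t^2 + 12*s^7*t^3 + 36*s^6*t^4 + 76*s^5*t^5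
          + 36*s^4*t^6 + 12*s^3*t^7 + 3*s^2*t^8 + 6*s*t^9 + t^10) := by
    ring
  have : 0 ≤ 9 * (s^4 + t^4) * ((s + t)^2 * (s^2 + t^2)) ^ 2
      - (4 * s^2 * t^2 * (s^2 + t^2) + 2 * (s^4 + t^4) * (s + t)^2) ^ 2 * 2 := by
    rw [h]; positivity
  linarith

lemma mixed_mean_le_sqrt_of_sq (s t : ℝ) (hs : 0 < s) (ht : 0 < t) :
    (4 * s^2 * t^2 / (s + t)^2 + 2 * (((s^2)^2 + (t^2)^2) / (s^2 + t^2))) / 3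
      ≤ Real.sqrt (((s^2)^2 + (t^2)^2) / 2) := by
  have hsum : (4 * s^2 * t^2 / (s + t)^2 + 2 * (((s^2)^2 + (t^2)^2) / (s^2 + t^2))) / 3
      = (4 * s^2 * t^2 * (s^2 + t^2) + 2 * (s^4 + t^4) * (s + t)^2)
        / (3 * ((s + t)^2 * (s^2 + t^2))) := by
    field_simp
  rw [Real.le_sqrt (by positivity) (by positivity), hsum, div_pow,
    div_le_div_iff₀ (by positivity) two_pos]
  linarith [mixed_mean_numerator_sq_le s t hs.le ht.le]

theorem stmt_3 (a b : ℝ) (ha : 0 < a) (hb : 0 < b) :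
    let P4 := 4*a*b/(Real.sqrt a + Real.sqrt b)^2
    let P6 := (a^2+b^2)/(a+b)
    let S := Real.sqrt ((a^2+b^2)/2)
    P4 + P6 - S ≤ (P6 + 2*P4)/3 := by
  intro P4 P6 S
  have key := mixed_mean_le_sqrt_of_sq (Real.sqrt a) (Real.sqrt b)
    (Real.sqrt_pos.mpr ha) (Real.sqrt_pos.mpr hb)
  rw [Real.sq_sqrt ha.le, Real.sq_sqrt hb.le] at key
  linarith
end

section
/- For all positive reals a and b, 15·S + 14·N1 − 14·P6 − 15·P4 ≥ 0, i.e. P4 + P6 − S ≤ (P6 + 14·N1)/15, where N1 = ((√a+√b)/2)², S = √((a²+b²)/2), P4 = 4ab/(√a+√b)², and P6 = (a²+b²)/(a+b). -/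
/-!
Substituting `a = x²`, `b = y²` makes `N1`, `P4`, `P6` rational in `x, y`, and
`14·P6 + 15·P4 − 14·N1 = R / (4 (x+y)² (x²+y²))` for an explicit polynomial `R` (`combinationNumerator`).
It then suffices that `R² ≤ 225 · (x⁴+y⁴)/2 · (4 (x+y)² (x²+y²))²`, and the difference of the two
sides is a polynomial in `(x−y)²` and `xy` with nonnegative coefficients.
-/

namespace PowerMeans

def combinationNumerator (x y : ℝ) : ℝ :=
  56 * (x ^ 4 + y ^ 4) * (x + y) ^ 2 + 240 * x ^ 2 * y ^ 2 * (x ^ 2 + y ^ 2)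
    - 14 * (x + y) ^ 4 * (x ^ 2 + y ^ 2)

theorem combinationNumerator_sq_le {x y : ℝ} (hx : 0 < x) (hy : 0 < y) :
    combinationNumerator x y ^ 2
      ≤ 225 * ((x ^ 4 + y ^ 4) / 2) * (4 * (x + y) ^ 2 * (x ^ 2 + y ^ 2)) ^ 2 := by
  have h : 225 * ((x ^ 4 + y ^ 4) / 2) * (4 * (x + y) ^ 2 * (x ^ 2 + y ^ 2)) ^ 2
      - combinationNumerator x y ^ 2
      = 38400 * (x - y) ^ 2 * (x * y) ^ 5 + 57920 * (x - y) ^ 4 * (x * y) ^ 4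
        + 57280 * (x - y) ^ 6 * (x * y) ^ 3 + 21536 * (x - y) ^ 8 * (x * y) ^ 2
        + 2928 * (x - y) ^ 10 * (x * y) + 36 * (x - y) ^ 12 := by
    unfold combinationNumerator; ring
  rw [← sub_nonneg, h]
  positivity

theorem combination_eq {x y : ℝ} (hx : 0 < x) (hy : 0 < y) :
    14 * (((x ^ 2) ^ 2 + (y ^ 2) ^ 2) / (x ^ 2 + y ^ 2)) + 15 * (4 * x ^ 2 * y ^ 2 / (x + y) ^ 2)
      - 14 * ((x + y) / 2) ^ 2
      = combinationNumerator x y / (4 * (x + y) ^ 2 * (x ^ 2 + y ^ 2)) := by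
  unfold combinationNumerator
  field_simp
  ring

theorem combination_le_sqrt {x y : ℝ} (hx : 0 < x) (hy : 0 < y) :
    14 * (((x ^ 2) ^ 2 + (y ^ 2) ^ 2) / (x ^ 2 + y ^ 2)) + 15 * (4 * x ^ 2 * y ^ 2 / (x + y) ^ 2)
      - 14 * ((x + y) / 2) ^ 2
      ≤ 15 * √(((x ^ 2) ^ 2 + (y ^ 2) ^ 2) / 2) := by
  have hsq : (combinationNumerator x y / (4 * (x + y) ^ 2 * (x ^ 2 + y ^ 2))) ^ 2
      ≤ 15 ^ 2 * (((x ^ 2) ^ 2 + (y ^ 2) ^ 2) / 2) := by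
    rw [div_pow, div_le_iff₀ (by positivity)]
    exact (combinationNumerator_sq_le hx hy).trans_eq (by ring)
  rw [combination_eq hx hy, ← Real.sqrt_sq (by norm_num : (0 : ℝ) ≤ 15), ← Real.sqrt_mul (by norm_num)]
  exact (le_abs_self _).trans (Real.abs_le_sqrt hsq)

end PowerMeans

theorem stmt_4 (a b : ℝ) (ha : 0 < a) (hb : 0 < b) :
    let N1 := ((Real.sqrt a + Real.sqrt b)/2)^2
    let S := Real.sqrt ((a^2+b^2)/2)
    let P4 := 4*a*b/(Real.sqrt a + Real.sqrt b)^2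
    let P6 := (a^2+b^2)/(a+b)
    15*S + 14*N1 - 14*P6 - 15*P4 ≥ 0 := by
  intro N1 S P4 P6
  obtain ⟨x, hx, rfl⟩ : ∃ x, 0 < x ∧ a = x ^ 2 := ⟨√a, Real.sqrt_pos.2 ha, (Real.sq_sqrt ha.le).symm⟩
  obtain ⟨y, hy, rfl⟩ : ∃ y, 0 < y ∧ b = y ^ 2 := ⟨√b, Real.sqrt_pos.2 hb, (Real.sq_sqrt hb.le).symm⟩
  have h := PowerMeans.combination_le_sqrt hx hy
  simp only [N1, S, P4, P6, Real.sqrt_sq hx.le, Real.sqrt_sq hy.le]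
  linarith
end

section
/- For all positive reals a and b, 10·S + 8·N1 − 9·P6 − 9·P4 ≥ 0, i.e. P4 + P6 − S ≤ (S + 8·N1)/9, where N1 = ((√a+√b)/2)², S = √((a²+b²)/2), P4 = 4ab/(√a+√b)², and P6 = (a²+b²)/(a+b). -/
lemma aux_stmt5 (x y : ℝ) (hx : 0 < x) (hy : 0 < y) :
    10*Real.sqrt ((x^4+y^4)/2) + 8*((x+y)/2)^2
      - 9*((x^4+y^4)/(x^2+y^2)) - 9*(4*(x^2)*(y^2)/(x+y)^2) ≥ 0 := by
  set S := Real.sqrt ((x^4+y^4)/2) with hSdef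
  have hS0 : 0 ≤ S := Real.sqrt_nonneg _
  have hS2 : S^2 = (x^4+y^4)/2 := Real.sq_sqrt (by positivity)
  have hd : (0:ℝ) < (x^2+y^2)*(x+y)^2 := by positivity
  set R : ℝ := 9*(x^4+y^4)*(x+y)^2 + 36*x^2*y^2*(x^2+y^2) - 2*(x+y)^4*(x^2+y^2) with hRdef
  have hQ : (0:ℝ) ≤ x^10+62*x^9*y-11*x^8*y^2+120*x^7*y^3-74*x^6*y^4+764*x^5*y^5
      -74*x^4*y^6+120*x^3*y^7-11*x^2*y^8+62*x*y^9+y^10 := by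
    nlinarith [mul_nonneg (mul_nonneg (pow_nonneg hx.le 7) hy.le) (sq_nonneg (x-y)),
      mul_nonneg (mul_nonneg hx.le (pow_nonneg hy.le 7)) (sq_nonneg (x-y)),
      mul_nonneg (mul_nonneg (pow_nonneg hx.le 5) (pow_nonneg hy.le 3)) (sq_nonneg (x-y)),
      mul_nonneg (mul_nonneg (pow_nonneg hx.le 3) (pow_nonneg hy.le 5)) (sq_nonneg (x-y)),
      pow_pos hx 10, pow_pos hy 10,
      mul_pos (pow_pos hx 9) hy, mul_pos hx (pow_pos hy 9),
      mul_pos (pow_pos hx 7) (pow_pos hy 3), mul_pos (pow_pos hx 3) (pow_pos hy 7),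
      mul_pos (pow_pos hx 5) (pow_pos hy 5)]
  have hsq : (10*S*((x^2+y^2)*(x+y)^2))^2 - R^2 = (x-y)^2 *
      (x^10+62*x^9*y-11*x^8*y^2+120*x^7*y^3-74*x^6*y^4+764*x^5*y^5
      -74*x^4*y^6+120*x^3*y^7-11*x^2*y^8+62*x*y^9+y^10) := by
    have h100 : (10*S*((x^2+y^2)*(x+y)^2))^2
        = 50*(x^4+y^4)*((x^2+y^2)*(x+y)^2)^2 := by
      rw [mul_pow, mul_pow, hS2]; ring
    rw [h100, hRdef]; ring
  have hRS : R ≤ 10*S*((x^2+y^2)*(x+y)^2) := by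
    nlinarith [hsq, hQ, mul_nonneg (mul_nonneg (by norm_num : (0:ℝ) ≤ 10) hS0) hd.le,
      sq_nonneg (x-y)]
  have hne1 : (x^2+y^2) ≠ 0 := by positivity
  have hne2 : ((x+y)^2) ≠ 0 := by positivity
  have heq : 10*S + 8*((x+y)/2)^2 - 9*((x^4+y^4)/(x^2+y^2)) - 9*(4*(x^2)*(y^2)/(x+y)^2)
      = (10*S*((x^2+y^2)*(x+y)^2) - R)/((x^2+y^2)*(x+y)^2) := by
    field_simp
    ring
  rw [ge_iff_le, ← sub_nonneg, sub_zero, heq]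
  exact div_nonneg (sub_nonneg.2 hRS) hd.le

theorem stmt_5 (a b : ℝ) (ha : 0 < a) (hb : 0 < b) :
    let N1 := ((Real.sqrt a + Real.sqrt b)/2)^2
    let S := Real.sqrt ((a^2+b^2)/2)
    let P4 := 4*a*b/(Real.sqrt a + Real.sqrt b)^2
    let P6 := (a^2+b^2)/(a+b)
    10*S + 8*N1 - 9*P6 - 9*P4 ≥ 0 := by
  intro N1 S P4 P6
  have hx : 0 < Real.sqrt a := Real.sqrt_pos.2 ha
  have hy : 0 < Real.sqrt b := Real.sqrt_pos.2 hb
  have h := aux_stmt5 (Real.sqrt a) (Real.sqrt b) hx hy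
  have hsa : Real.sqrt a ^ 2 = a := Real.sq_sqrt ha.le
  have hsb : Real.sqrt b ^ 2 = b := Real.sq_sqrt hb.le
  have hsa4 : Real.sqrt a ^ 4 = a^2 := by rw [show (4:ℕ)=2*2 from rfl, pow_mul, hsa]
  have hsb4 : Real.sqrt b ^ 4 = b^2 := by rw [show (4:ℕ)=2*2 from rfl, pow_mul, hsb]
  rw [hsa, hsb, hsa4, hsb4] at h
  exact h
end

section
/- For all positive reals a and b, (P5 + 2·G)/3 ≤ (P6 + 2·P4)/3, i.e. P6 + 2·P4 − P5 − 2·G ≥ 0, where P5 = ((a+b)/(√a+√b))², G = √(ab), P6 = (a²+b²)/(a+b), and P4 = 4ab/(√a+√b)². -/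
/-!
Substituting `a = s²`, `b = t²` turns all four means into rational functions of `s` and `t`,
and with `p = s + t`, `q = s t` the numerator of `(P6 + 2 P4) - (P5 + 2 G)` collapses to
`2 q² (p² - 4q) = 2 s² t² (s - t)²`.
-/

lemma mean_combination_gap_eq {s t : ℝ} (h : s + t ≠ 0) :
    ((s ^ 2) ^ 2 + (t ^ 2) ^ 2) / (s ^ 2 + t ^ 2) + 2 * (4 * s ^ 2 * t ^ 2 / (s + t) ^ 2)
      - (((s ^ 2 + t ^ 2) / (s + t)) ^ 2 + 2 * (s * t))
      = 2 * (s * t * (s - t)) ^ 2 / ((s ^ 2 + t ^ 2) * (s + t) ^ 2) := by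
  have hsq : s ^ 2 + t ^ 2 ≠ 0 := by
    intro h0
    obtain rfl : s = 0 := by nlinarith [sq_nonneg s, sq_nonneg t]
    obtain rfl : t = 0 := by nlinarith [sq_nonneg t]
    simp at h
  field_simp
  ring

lemma mean_combination_le {s t : ℝ} (h : s + t ≠ 0) :
    ((s ^ 2 + t ^ 2) / (s + t)) ^ 2 + 2 * (s * t)
      ≤ ((s ^ 2) ^ 2 + (t ^ 2) ^ 2) / (s ^ 2 + t ^ 2) + 2 * (4 * s ^ 2 * t ^ 2 / (s + t) ^ 2) := by
  have hgap := mean_combination_gap_eq h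
  have : 0 ≤ 2 * (s * t * (s - t)) ^ 2 / ((s ^ 2 + t ^ 2) * (s + t) ^ 2) := by positivity
  linarith

theorem stmt_6 (a b : ℝ) (ha : 0 < a) (hb : 0 < b) :
    let P5 := ((a+b)/(Real.sqrt a + Real.sqrt b))^2
    let G := Real.sqrt (a*b)
    let P6 := (a^2+b^2)/(a+b)
    let P4 := 4*a*b/(Real.sqrt a + Real.sqrt b)^2
    (P5 + 2*G)/3 ≤ (P6 + 2*P4)/3 := by
  intro P5 G P6 P4
  obtain ⟨s, hs, rfl⟩ : ∃ s, 0 < s ∧ s ^ 2 = a := ⟨√a, Real.sqrt_pos.2 ha, Real.sq_sqrt ha.le⟩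
  obtain ⟨t, ht, rfl⟩ : ∃ t, 0 < t ∧ t ^ 2 = b := ⟨√b, Real.sqrt_pos.2 hb, Real.sq_sqrt hb.le⟩
  have hG : G = s * t := by
    rw [← Real.sqrt_sq (mul_pos hs ht).le, mul_pow]
  simp only [P5, P6, P4, hG, Real.sqrt_sq hs.le, Real.sqrt_sq ht.le]
  gcongr ?_ / 3
  exact mean_combination_le (by positivity)
end

section
/- For all positive reals a and b, 2·P5 + 18·N3 − 15·A − 5·G ≥ 0, i.e. (3·A + G)/4 ≤ (P5 + 9·N3)/10, where A = (a+b)/2, G = √(ab), N3 = (a + √(ab) + b)/3 (Heron's mean), and P5 = ((a+b)/(√a+√b))². -/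
lemma aux_stmt7 (x y : ℝ) (hx : 0 < x) (hy : 0 < y) :
    2*(((x^2+y^2)/(x+y))^2) + 18*((x^2 + x*y + y^2)/3) - 15*((x^2+y^2)/2)
      - 5*(x*y) ≥ 0 := by
  have hxy : 0 < x + y := by positivity
  rw [ge_iff_le, ← sub_nonneg, sub_zero, div_pow]
  have key : 2*((x^2+y^2)^2/(x+y)^2) + 18*((x^2 + x*y + y^2)/3) - 15*((x^2+y^2)/2)
      - 5*(x*y) = (x-y)^4 / (2*(x+y)^2) := by
    field_simp
    ring
  rw [key]
  positivity

theorem stmt_7 (a b : ℝ) (ha : 0 < a) (hb : 0 < b) :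
    let P5 := ((a+b)/(Real.sqrt a + Real.sqrt b))^2
    let N3 := (a + Real.sqrt (a*b) + b)/3
    let A := (a+b)/2
    let G := Real.sqrt (a*b)
    2*P5 + 18*N3 - 15*A - 5*G ≥ 0 := by
  intro P5 N3 A G
  have hx : 0 < Real.sqrt a := Real.sqrt_pos.2 ha
  have hy : 0 < Real.sqrt b := Real.sqrt_pos.2 hb
  have hab : Real.sqrt (a*b) = Real.sqrt a * Real.sqrt b := Real.sqrt_mul ha.le b
  have ha' : Real.sqrt a ^ 2 = a := Real.sq_sqrt ha.le
  have hb' : Real.sqrt b ^ 2 = b := Real.sq_sqrt hb.le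
  have h := aux_stmt7 (Real.sqrt a) (Real.sqrt b) hx hy
  rw [ha', hb'] at h
  simp only [P5, N3, A, G, hab]
  exact h
end

section
/- For all positive reals a and b, 5·S − 3·N3 − 2·P5 ≥ 0, i.e. (P5 + 9·N3)/10 ≤ (S + 3·N3)/4, where S = √((a²+b²)/2), N3 = (a + √(ab) + b)/3, and P5 = ((a+b)/(√a+√b))². -/
/-!
Substituting `a = x²`, `b = y²` turns the three means into `3·N3 = x² + xy + y²`,
`P5 = (x² + y²)² / (x + y)²` and `S = √((x⁴ + y⁴)/2)`. After clearing the denominator and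
squaring, the inequality becomes polynomial, and the difference of the two sides factors as
`(x - y)²` times a polynomial in `xy` and `x² + y²` with nonnegative coefficients.
-/

lemma sq_heron_power_combination_le {x y : ℝ} (hx : 0 ≤ x) (hy : 0 ≤ y) :
    ((x ^ 2 + x * y + y ^ 2) * (x + y) ^ 2 + 2 * (x ^ 2 + y ^ 2) ^ 2) ^ 2 ≤
      25 * (x + y) ^ 4 * ((x ^ 4 + y ^ 4) / 2) := by
  have hp : 0 ≤ x * y := mul_nonneg hx hy
  have hs : 0 ≤ x ^ 2 + y ^ 2 := by positivity
  have hfactor : 25 * (x + y) ^ 4 * ((x ^ 4 + y ^ 4) / 2) -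
      ((x ^ 2 + x * y + y ^ 2) * (x + y) ^ 2 + 2 * (x ^ 2 + y ^ 2) ^ 2) ^ 2 =
      (x - y) ^ 2 * (104 * (x * y) ^ 3 + 164 * (x * y) ^ 2 * (x ^ 2 + y ^ 2)
        + 78 * (x * y) * (x ^ 2 + y ^ 2) ^ 2 + 7 * (x ^ 2 + y ^ 2) ^ 3) / 2 := by
    ring
  have : 0 ≤ (x - y) ^ 2 * (104 * (x * y) ^ 3 + 164 * (x * y) ^ 2 * (x ^ 2 + y ^ 2)
      + 78 * (x * y) * (x ^ 2 + y ^ 2) ^ 2 + 7 * (x ^ 2 + y ^ 2) ^ 3) / 2 := by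
    positivity
  linarith

lemma add_two_mul_sq_div_le_five_mul_sqrt {x y : ℝ} (hx : 0 ≤ x) (hy : 0 ≤ y)
    (hxy : 0 < x + y) :
    (x ^ 2 + x * y + y ^ 2) + 2 * ((x ^ 2 + y ^ 2) ^ 2 / (x + y) ^ 2) ≤
      5 * √((x ^ 4 + y ^ 4) / 2) := by
  have hsq : 0 < (x + y) ^ 2 := by positivity
  have hcleared : (x ^ 2 + x * y + y ^ 2) * (x + y) ^ 2 + 2 * (x ^ 2 + y ^ 2) ^ 2 ≤
      5 * √((x ^ 4 + y ^ 4) / 2) * (x + y) ^ 2 := by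
    have hroot : √(25 * (x + y) ^ 4) = 5 * (x + y) ^ 2 := by
      rw [show 25 * (x + y) ^ 4 = (5 * (x + y) ^ 2) ^ 2 by ring]
      exact Real.sqrt_sq (by positivity)
    calc _ ≤ √(25 * (x + y) ^ 4 * ((x ^ 4 + y ^ 4) / 2)) :=
          Real.le_sqrt_of_sq_le (sq_heron_power_combination_le hx hy)
      _ = _ := by rw [Real.sqrt_mul (by positivity), hroot]; ring
  rw [← le_sub_iff_add_le', mul_div_assoc', div_le_iff₀ hsq]
  linarith

theorem stmt_8 (a b : ℝ) (ha : 0 < a) (hb : 0 < b) :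
    let S := Real.sqrt ((a^2+b^2)/2)
    let N3 := (a + Real.sqrt (a*b) + b)/3
    let P5 := ((a+b)/(Real.sqrt a + Real.sqrt b))^2
    5*S - 3*N3 - 2*P5 ≥ 0 := by
  intro S N3 P5
  obtain ⟨x, hx, rfl⟩ : ∃ x, 0 < x ∧ x ^ 2 = a := ⟨√a, by positivity, Real.sq_sqrt ha.le⟩
  obtain ⟨y, hy, rfl⟩ : ∃ y, 0 < y ∧ y ^ 2 = b := ⟨√b, by positivity, Real.sq_sqrt hb.le⟩
  have hS : S = √((x ^ 4 + y ^ 4) / 2) := by simp only [S]; ring_nf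
  have hN3 : 3 * N3 = x ^ 2 + x * y + y ^ 2 := by
    simp only [N3, ← mul_pow, Real.sqrt_sq (mul_pos hx hy).le]; ring
  have hP5 : P5 = (x ^ 2 + y ^ 2) ^ 2 / (x + y) ^ 2 := by
    simp only [P5, Real.sqrt_sq hx.le, Real.sqrt_sq hy.le, div_pow]
  have := add_two_mul_sq_div_le_five_mul_sqrt hx.le hy.le (add_pos hx hy)
  linarith
end

section
/- For all positive reals a and b, 20·S + 10·H − 3·P5 − 27·N3 ≥ 0, i.e. (P5 + 9·N3)/10 ≤ (2·S + H)/3, where S = √((a²+b²)/2), H = 2ab/(a+b), N3 = (a + √(ab) + b)/3, and P5 = ((a+b)/(√a+√b))². -/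
theorem stmt_9 (a b : ℝ) (ha : 0 < a) (hb : 0 < b) :
    let S := Real.sqrt ((a^2+b^2)/2)
    let H := 2*a*b/(a+b)
    let P5 := ((a+b)/(Real.sqrt a + Real.sqrt b))^2
    let N3 := (a + Real.sqrt (a*b) + b)/3
    20*S + 10*H - 3*P5 - 27*N3 ≥ 0 := by
  intro S H P5 N3
  set x := Real.sqrt a with hxdef
  set y := Real.sqrt b with hydef
  have hx : 0 < x := Real.sqrt_pos.mpr ha
  have hy : 0 < y := Real.sqrt_pos.mpr hb
  have hxa : x ^ 2 = a := Real.sq_sqrt ha.le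
  have hyb : y ^ 2 = b := Real.sq_sqrt hb.le
  have hab : Real.sqrt (a * b) = x * y := by
    rw [← hxa, ← hyb, show x ^ 2 * y ^ 2 = (x * y) ^ 2 by ring,
      Real.sqrt_sq (by positivity)]
  have hxy2 : (0:ℝ) < x ^ 2 + y ^ 2 := by positivity
  -- rational lower bound for S
  set L : ℝ := 2 * (x ^ 4 + y ^ 4) * (x ^ 2 + y ^ 2) / (3 * x ^ 4 + 2 * x ^ 2 * y ^ 2 + 3 * y ^ 4)
    with hLdef
  have hD : (0:ℝ) < 3 * x ^ 4 + 2 * x ^ 2 * y ^ 2 + 3 * y ^ 4 := by positivity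
  have hS : L ≤ S := by
    have hL0 : 0 ≤ L := by positivity
    have h1 : L ^ 2 ≤ (a ^ 2 + b ^ 2) / 2 := by
      rw [← hxa, ← hyb, hLdef, div_pow, div_le_iff₀ (by positivity)]
      nlinarith [sq_nonneg (2 * (x ^ 4 + y ^ 4) - (x ^ 2 + y ^ 2) ^ 2),
        mul_pos hx hy, sq_nonneg (x - y), sq_nonneg (x + y), sq_nonneg (x * y)]
    exact (Real.le_sqrt hL0 (by positivity)).mpr h1
  have hkey : 0 ≤ 20 * L + 10 * H - 3 * P5 - 27 * N3 := by
    have hH : H = 2 * x ^ 2 * y ^ 2 / (x ^ 2 + y ^ 2) := by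
      rw [show H = 2 * a * b / (a + b) from rfl, ← hxa, ← hyb]
    have hP5 : P5 = (x ^ 2 + y ^ 2) ^ 2 / (x + y) ^ 2 := by
      rw [show P5 = ((a + b) / (x + y)) ^ 2 from rfl, ← hxa, ← hyb, div_pow]
    have hN3 : N3 = (x ^ 2 + x * y + y ^ 2) / 3 := by
      rw [show N3 = (a + Real.sqrt (a * b) + b) / 3 from rfl, hab, ← hxa, ← hyb]
    rw [hH, hP5, hN3, hLdef]
    have hEq : 20 * (2 * (x ^ 4 + y ^ 4) * (x ^ 2 + y ^ 2) /
          (3 * x ^ 4 + 2 * x ^ 2 * y ^ 2 + 3 * y ^ 4)) +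
        10 * (2 * x ^ 2 * y ^ 2 / (x ^ 2 + y ^ 2)) -
        3 * ((x ^ 2 + y ^ 2) ^ 2 / (x + y) ^ 2) - 27 * ((x ^ 2 + x * y + y ^ 2) / 3) =
        ((x - y) ^ 2 * ((x - y) ^ 2 *
            (4 * (x ^ 2 + y ^ 2) ^ 3 + 15 * (x ^ 2 + y ^ 2) ^ 2 * (x * y) +
              18 * (x ^ 2 + y ^ 2) * (x * y) ^ 2 + 80 * (x * y) ^ 3) +
          240 * (x * y) ^ 4)) /
        ((3 * x ^ 4 + 2 * x ^ 2 * y ^ 2 + 3 * y ^ 4) * (x ^ 2 + y ^ 2) * (x + y) ^ 2) := by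
      field_simp
      ring
    rw [hEq]
    apply div_nonneg _ (by positivity)
    have h2 : (0:ℝ) ≤ (x - y) ^ 2 := sq_nonneg _
    have h3 : (0:ℝ) ≤ 4 * (x ^ 2 + y ^ 2) ^ 3 + 15 * (x ^ 2 + y ^ 2) ^ 2 * (x * y) +
        18 * (x ^ 2 + y ^ 2) * (x * y) ^ 2 + 80 * (x * y) ^ 3 := by positivity
    positivity
  linarith
end

section
/- For all positive reals a and b, 40·P6 + 45·H − 45·A − 4·P5 − 36·N3 ≥ 0, i.e. (P5 + 9·N3)/10 ≤ (8·P6 + 9·H − 9·A)/8, where P6 = (a²+b²)/(a+b), H = 2ab/(a+b), A = (a+b)/2, P5 = ((a+b)/(√a+√b))², and N3 = (a + √(ab) + b)/3. -/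
theorem stmt_10 (a b : ℝ) (ha : 0 < a) (hb : 0 < b) :
    let P6 := (a^2+b^2)/(a+b)
    let H := 2*a*b/(a+b)
    let A := (a+b)/2
    let P5 := ((a+b)/(Real.sqrt a + Real.sqrt b))^2
    let N3 := (a + Real.sqrt (a*b) + b)/3
    40*P6 + 45*H - 45*A - 4*P5 - 36*N3 ≥ 0 := by
  intro P6 H A P5 N3
  have hx : 0 < Real.sqrt a := Real.sqrt_pos.2 ha
  have hy : 0 < Real.sqrt b := Real.sqrt_pos.2 hb
  set x := Real.sqrt a with hxd
  set y := Real.sqrt b with hyd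
  have ha' : a = x^2 := (Real.sq_sqrt ha.le).symm
  have hb' : b = y^2 := (Real.sq_sqrt hb.le).symm
  have hab : Real.sqrt (a*b) = x*y := by rw [Real.sqrt_mul ha.le]
  simp only [P6, H, A, P5, N3, hab, ← hxd, ← hyd]
  rw [ha', hb', ge_iff_le, ← sub_nonneg]
  have h1 : (0:ℝ) < x^2 + y^2 := by positivity
  have h2 : (0:ℝ) < x + y := by positivity
  have key : 40*((x^2)^2+(y^2)^2)/(x^2+y^2) + 45*(2*(x^2)*(y^2))/(x^2+y^2) - 45*((x^2+y^2)/2)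
      - 4*((x^2+y^2)/(x+y))^2 - 36*((x^2 + x*y + y^2)/3) - 0
      = (x-y)^4 * (3*x^2 + 10*x*y + 3*y^2) / (2*(x^2+y^2)*(x+y)^2) := by
    field_simp
    ring
  have goal_eq : 40*((x^2)^2+(y^2)^2)/(x^2+y^2) + 45*(2*(x^2)*(y^2))/(x^2+y^2) - 45*((x^2+y^2)/2)
      - 4*((x^2+y^2)/(x+y))^2 - 36*((x^2 + x*y + y^2)/3) - 0 ≥ 0 := by
    rw [key]; positivity
  calc (0:ℝ) ≤ _ := goal_eq
    _ = _ := by ring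
end

section
/- For all positive reals a and b, P5 − 2·N2 + G ≥ 0, i.e. (P5 + 6·N2 − G)/6 ≤ (P5 + 2·N2)/3, where P5 = ((a+b)/(√a+√b))², N2 = ((√a+√b)/2)·√((a+b)/2), and G = √(ab). -/
theorem stmt_12 (a b : ℝ) (ha : 0 < a) (hb : 0 < b) :
    let P5 := ((a+b)/(Real.sqrt a + Real.sqrt b))^2
    let N2 := ((Real.sqrt a + Real.sqrt b)/2) * Real.sqrt ((a+b)/2)
    let G := Real.sqrt (a*b)
    P5 - 2*N2 + G ≥ 0 := by
  intro P5 N2 G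
  set x := Real.sqrt a with hxdef
  set y := Real.sqrt b with hydef
  have hx : 0 < x := Real.sqrt_pos.2 ha
  have hy : 0 < y := Real.sqrt_pos.2 hb
  have hx2 : x^2 = a := Real.sq_sqrt ha.le
  have hy2 : y^2 = b := Real.sq_sqrt hb.le
  have hG : G = x*y := by
    show Real.sqrt (a*b) = x*y
    rw [Real.sqrt_mul ha.le]
  set r := Real.sqrt ((a+b)/2) with hrdef
  have hr0 : 0 ≤ r := Real.sqrt_nonneg _
  have hr2 : r^2 = (a+b)/2 := Real.sq_sqrt (by positivity)
  have hs : 0 < x + y := by linarith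
  have poly : 2*(((x^2+y^2)^2 + x*y*(x+y)^2)^2) - (x+y)^6*(x^2+y^2)
      = (x-y)^4*(x^4+2*x^3*y+4*x^2*y^2+2*x*y^3+y^4) := by ring
  have hpoly : ((x+y)^3*r)^2 ≤ ((a+b)^2 + x*y*(x+y)^2)^2 := by
    have h1 : ((x+y)^3*r)^2 = (x+y)^6 * ((a+b)/2) := by rw [mul_pow, hr2]; ring
    rw [h1, ← hx2, ← hy2]
    nlinarith [poly,
      mul_nonneg (by positivity : (0:ℝ) ≤ (x-y)^4) (by positivity : (0:ℝ) ≤ x^4+2*x^3*y+4*x^2*y^2+2*x*y^3+y^4)]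
  have hB : 0 ≤ (a+b)^2 + x*y*(x+y)^2 := by positivity
  have hA : 0 ≤ (x+y)^3*r := by positivity
  have key : (x+y)^3*r ≤ (a+b)^2 + x*y*(x+y)^2 := by nlinarith [hpoly, hA, hB]
  have hrepr : P5 - 2*N2 + G = ((a+b)^2 + x*y*(x+y)^2 - (x+y)^3*r)/(x+y)^2 := by
    show ((a+b)/(x+y))^2 - 2*((x+y)/2*r) + G = _
    rw [hG]
    field_simp
    ring
  rw [hrepr]
  apply div_nonneg _ (by positivity)
  linarith
end

section
/- For all positive reals a and b, 18·P6 + 21·H − 14·N2 − 18·N3 − 7·P5 ≥ 0, where P6 = (a²+b²)/(a+b), H = 2ab/(a+b), N2 = ((√a+√b)/2)·√((a+b)/2), N3 = (a + √(ab) + b)/3, and P5 = ((a+b)/(√a+√b))². -/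
lemma keyB (x y s : ℝ) (hx : 0 < x) (hy : 0 < y) (hs : 0 < s)
    (h : 2*s^2 = x^2+y^2) :
    0 ≤ 3/2*(x+y)^4 + 6*(x+y)^3*s + 6*(x+y)^2*s^2 - 14*(x+y)*s^3 - 14*s^4 := by
  have h1 : 2*s^2 ≤ (x+y)^2 := by nlinarith [mul_pos hx hy]
  have h2 : x+y ≤ 2*s := by nlinarith [sq_nonneg (x-y)]
  nlinarith [mul_pos (mul_pos hs hs) (mul_pos hs hs), mul_pos hs hs,
    mul_nonneg (mul_nonneg hs.le hs.le) (sub_nonneg.2 h1),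
    mul_nonneg (mul_nonneg (add_pos hx hy).le hs.le) (sub_nonneg.2 h1),
    mul_nonneg (sub_nonneg.2 h2) (mul_pos (mul_pos hs hs) hs).le,
    sq_nonneg ((x+y)^2 - 2*s^2)]

lemma keyMain (x y s : ℝ) (hx : 0 < x) (hy : 0 < y) (hs : 0 < s)
    (h : 2*s^2 = x^2+y^2) :
    14*(x+y)^3*s^3 + 6*(x^2+x*y+y^2)*(x+y)^2*(x^2+y^2) + 7*(x^2+y^2)^3
      ≤ (x+y)^2*(18*(x^4+y^4)+42*x^2*y^2) := by
  have hB := keyB x y s hx hy hs h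
  have hid : (x+y)^2*(18*(x^4+y^4)+42*x^2*y^2)
      - (14*(x+y)^3*s^3 + 6*(x^2+x*y+y^2)*(x+y)^2*(x^2+y^2) + 7*(x^2+y^2)^3)
      = (x+y-2*s)^2 * (3/2*(x+y)^4 + 6*(x+y)^3*s + 6*(x+y)^2*s^2 - 14*(x+y)*s^3 - 14*s^4) := by
    linear_combination (28*s^4 - 19*y^2*s^2 + (-7/2)*y^4 - 66*x*y*s^2 - 9*x*y^3 - 19*x^2*s^2
      + 17*x^2*y^2 - 9*x^3*y + (-7/2)*x^4) * h
  nlinarith [mul_nonneg (sq_nonneg (x+y-2*s)) hB, hid]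

lemma main2 (a b x y s : ℝ) (hx : 0 < x) (hy : 0 < y) (hs : 0 < s)
    (hax : a = x^2) (hby : b = y^2) (hs2 : 2*s^2 = a+b) :
    18*((a^2+b^2)/(a+b)) + 21*(2*a*b/(a+b)) - 14*(((x+y)/2)*s)
      - 18*((a+x*y+b)/3) - 7*((a+b)/(x+y))^2 ≥ 0 := by
  subst hax hby
  have key := keyMain x y s hx hy hs hs2
  have hxy : 0 < x + y := by linarith
  have hxy2 : 0 < x^2 + y^2 := by positivity
  have hE : 18*(((x^2)^2+(y^2)^2)/(x^2+y^2)) + 21*(2*(x^2)*(y^2)/(x^2+y^2)) - 14*(((x+y)/2)*s)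
      - 18*((x^2+x*y+y^2)/3) - 7*((x^2+y^2)/(x+y))^2 =
      ((x+y)^2*(18*(x^4+y^4)+42*x^2*y^2)
        - (14*(x+y)^3*s^3 + 6*(x^2+x*y+y^2)*(x+y)^2*(x^2+y^2) + 7*(x^2+y^2)^3))
        / ((x^2+y^2)*(x+y)^2) + 7*(x+y)*s*(2*s^2-(x^2+y^2))/(x^2+y^2) := by
    field_simp
    ring
  rw [ge_iff_le, hE, hs2]
  simp only [sub_self, mul_zero, zero_mul, zero_div, add_zero]
  apply div_nonneg (by linarith) (by positivity)

theorem stmt_13 (a b : ℝ) (ha : 0 < a) (hb : 0 < b) :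
    let P6 := (a^2+b^2)/(a+b)
    let H := 2*a*b/(a+b)
    let N2 := ((Real.sqrt a + Real.sqrt b)/2) * Real.sqrt ((a+b)/2)
    let N3 := (a + Real.sqrt (a*b) + b)/3
    let P5 := ((a+b)/(Real.sqrt a + Real.sqrt b))^2
    18*P6 + 21*H - 14*N2 - 18*N3 - 7*P5 ≥ 0 := by
  intro P6 H N2 N3 P5
  have hx : 0 < Real.sqrt a := Real.sqrt_pos.2 ha
  have hy : 0 < Real.sqrt b := Real.sqrt_pos.2 hb
  have hs : 0 < Real.sqrt ((a+b)/2) := Real.sqrt_pos.2 (by linarith)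
  have hax : a = (Real.sqrt a)^2 := (Real.sq_sqrt ha.le).symm
  have hby : b = (Real.sqrt b)^2 := (Real.sq_sqrt hb.le).symm
  have hs2 : 2*(Real.sqrt ((a+b)/2))^2 = a+b := by
    rw [Real.sq_sqrt (by linarith : (0:ℝ) ≤ (a+b)/2)]; ring
  have hab : Real.sqrt (a*b) = Real.sqrt a * Real.sqrt b := Real.sqrt_mul ha.le b
  show 18*((a^2+b^2)/(a+b)) + 21*(2*a*b/(a+b))
      - 14*(((Real.sqrt a + Real.sqrt b)/2) * Real.sqrt ((a+b)/2))
      - 18*((a + Real.sqrt (a*b) + b)/3)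
      - 7*((a+b)/(Real.sqrt a + Real.sqrt b))^2 ≥ 0
  rw [hab]
  exact main2 a b _ _ _ hx hy hs hax hby hs2
end

section
/- For all positive reals a and b, 16·P4 + 9·S − 25·G ≥ 0, i.e. (5·H + 4·S − 4·P4)/5 ≤ (4·H + 5·S − 5·G)/4, where P4 = 4ab/(√a+√b)², S = √((a²+b²)/2), G = √(ab), and H = 2ab/(a+b). -/
theorem stmt_14 (a b : ℝ) (ha : 0 < a) (hb : 0 < b) :
    let P4 := 4*a*b/(Real.sqrt a + Real.sqrt b)^2
    let S := Real.sqrt ((a^2+b^2)/2)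
    let G := Real.sqrt (a*b)
    16*P4 + 9*S - 25*G ≥ 0 := by
  intro P4 S G
  set x := Real.sqrt a with hxdef
  set y := Real.sqrt b with hydef
  have hx : 0 < x := Real.sqrt_pos.mpr ha
  have hy : 0 < y := Real.sqrt_pos.mpr hb
  have hax : x^2 = a := Real.sq_sqrt ha.le
  have hbx : y^2 = b := Real.sq_sqrt hb.le
  have hG : G = x * y := by
    simp only [G, hxdef, hydef, Real.sqrt_mul ha.le]
  have hS : S ≥ (x^2 + y^2) / 2 := by
    have h1 : ((a+b)/2)^2 ≤ (a^2+b^2)/2 := by nlinarith [sq_nonneg (a-b)]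
    have h2 : 0 ≤ (a+b)/2 := by positivity
    have : (a+b)/2 ≤ S := by
      calc (a+b)/2 = Real.sqrt (((a+b)/2)^2) := (Real.sqrt_sq h2).symm
        _ ≤ S := Real.sqrt_le_sqrt h1
    rw [hax, hbx]; linarith
  have hP4 : P4 = 4*x^2*y^2/(x+y)^2 := by rw [hax, hbx]
  have hP : 16*P4 ≥ 25*(x*y) - 9*((x^2+y^2)/2) := by
    rw [hP4, ge_iff_le, ← sub_nonneg]
    have heq : 16*(4*x^2*y^2/(x+y)^2) - (25*(x*y) - 9*((x^2+y^2)/2))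
        = ((x^2+y^2) - 2*(x*y)) * (9*(x^2+y^2) - 14*(x*y)) / (2*(x+y)^2) := by
      have h0 : (x+y)^2 ≠ 0 := by positivity
      field_simp
      ring
    rw [heq]
    apply div_nonneg _ (by positivity)
    apply mul_nonneg
    · nlinarith [sq_nonneg (x-y)]
    · nlinarith [sq_nonneg (x-y), mul_pos hx hy]
  rw [hG]
  linarith
end

section
/- For all positive reals a and b, 35·S + 24·N3 − 35·G − 24·P6 ≥ 0, where S = √((a²+b²)/2), N3 = (a + √(ab) + b)/3, G = √(ab), and P6 = (a²+b²)/(a+b). -/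
/-!
With `A = (a + b) / 2` the four means are tied by `S² + G² = 2A²`, `N3 = (2A + G) / 3` and
`P6 = S² / A`, so the claim reads `24 S² ≤ A (35 (S - G) + 8 (2A + G))`. Writing
`24 S² = 24 A² + 12 (S - G)(S + G)` and using `S + G ≤ 2A` and `A - G ≤ S - G` (that is, `A ≤ S`),
the right-hand side exceeds the left by at least `3 A (S - G) ≥ 0`.
-/

lemma twenty_four_sq_le_of_sq_add_sq_eq_two_mul_sq {A S G : ℝ} (hA : 0 < A) (hG : 0 ≤ G)
    (hAS : A ≤ S) (hSG : S ^ 2 + G ^ 2 = 2 * A ^ 2) :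
    24 * S ^ 2 ≤ A * (35 * (S - G) + 8 * (2 * A + G)) := by
  have hsum : S + G ≤ 2 * A := by nlinarith [sq_nonneg (S - G)]
  have hGS : G ≤ S := by nlinarith
  calc 24 * S ^ 2 = 24 * A ^ 2 + 12 * (S - G) * (S + G) := by linear_combination 12 * hSG
    _ ≤ 24 * A ^ 2 + 24 * A * (S - G) := by nlinarith
    _ ≤ A * (35 * (S - G) + 8 * (2 * A + G)) := by nlinarith [mul_nonneg hA.le (sub_nonneg.2 hGS)]

lemma add_div_two_le_sqrt_sq_add_sq_div_two (a b : ℝ) :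
    (a + b) / 2 ≤ √((a ^ 2 + b ^ 2) / 2) :=
  Real.le_sqrt_of_sq_le (by nlinarith [sq_nonneg (a - b)])

theorem stmt_15 (a b : ℝ) (ha : 0 < a) (hb : 0 < b) :
    let S := Real.sqrt ((a^2+b^2)/2)
    let N3 := (a + Real.sqrt (a*b) + b)/3
    let G := Real.sqrt (a*b)
    let P6 := (a^2+b^2)/(a+b)
    35*S + 24*N3 - 35*G - 24*P6 ≥ 0 := by
  intro S N3 G P6
  set A := (a + b) / 2
  have hA : 0 < A := by positivity
  have hS : S ^ 2 = (a ^ 2 + b ^ 2) / 2 := Real.sq_sqrt (by positivity)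
  have hG : G ^ 2 = a * b := Real.sq_sqrt (by positivity)
  have hP6 : P6 = S ^ 2 / A := by simp only [P6, hS, A]; field_simp
  have hN3 : N3 = (2 * A + G) / 3 := by simp only [N3, G, A]; ring
  have key : 24 * (S ^ 2 / A) ≤ 35 * (S - G) + 8 * (2 * A + G) := by
    rw [← mul_div_assoc, div_le_iff₀' hA]
    exact twenty_four_sq_le_of_sq_add_sq_eq_two_mul_sq hA (Real.sqrt_nonneg _)
      (add_div_two_le_sqrt_sq_add_sq_div_two a b) (by rw [hS, hG]; ring)
  rw [hN3, hP6]
  linarith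
end

section
/- For all positive reals a and b, 7·S + 6·N3 − 7·H − 6·P6 ≥ 0, i.e. (7·H + 6·P6 − 6·N3)/7 ≤ S, where S = √((a²+b²)/2), N3 = (a + √(ab) + b)/3, H = 2ab/(a+b), and P6 = (a²+b²)/(a+b). -/
theorem stmt_16 (a b : ℝ) (ha : 0 < a) (hb : 0 < b) :
    let S := Real.sqrt ((a^2+b^2)/2)
    let N3 := (a + Real.sqrt (a*b) + b)/3
    let H := 2*a*b/(a+b)
    let P6 := (a^2+b^2)/(a+b)
    7*S + 6*N3 - 7*H - 6*P6 ≥ 0 := by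
  intro S N3 H P6
  have hab : 0 < a + b := by linarith
  set g := Real.sqrt (a*b) with hg
  have hS0 : 0 ≤ S := Real.sqrt_nonneg _
  have hg0 : 0 ≤ g := Real.sqrt_nonneg _
  have hS2 : S^2 = (a^2+b^2)/2 := Real.sq_sqrt (by positivity)
  have hg2 : g^2 = a*b := Real.sq_sqrt (by positivity)
  have hSg : g ≤ S := by
    apply Real.sqrt_le_sqrt
    nlinarith [sq_nonneg (a-b)]
  have ht2 : (a+b)^2 = 2*S^2 + 2*g^2 := by rw [hS2, hg2]; ring
  have key : 7*S*(a+b) + 2*g*(a+b) ≥ 8*S^2 + 10*g^2 := by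
    have hL : 0 ≤ (7*S + 2*g)*(a+b) := by positivity
    have hR : 0 < 8*S^2 + 10*g^2 := by
      have : 0 < g^2 := by rw [hg2]; positivity
      nlinarith [sq_nonneg S]
    have hfac : ((7*S+2*g)*(a+b))^2 - (8*S^2+10*g^2)^2
        = (S-g)*(34*S^3+90*S^2*g+36*S*g^2+92*g^3) := by
      rw [show ((7*S+2*g)*(a+b))^2 = (7*S+2*g)^2*((a+b)^2) by ring, ht2]; ring
    have hfn : 0 ≤ (S-g)*(34*S^3+90*S^2*g+36*S*g^2+92*g^3) :=
      mul_nonneg (sub_nonneg.mpr hSg) (by positivity)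
    nlinarith [hfac, hfn, hL, hR]
  have hexp : 7*S + 6*N3 - 7*H - 6*P6
      = (7*S*(a+b) + 2*g*(a+b) + 2*(a+b)^2 - 14*a*b - 6*(a^2+b^2))/(a+b) := by
    show 7*S + 6*((a + g + b)/3) - 7*(2*a*b/(a+b)) - 6*((a^2+b^2)/(a+b)) = _
    field_simp
    ring
  rw [hexp]
  apply div_nonneg _ hab.le
  nlinarith [hS2, hg2, key]
end

section
/- For all positive reals a and b, 18·N1 − P6 − 9·G − 8·N2 ≥ 0, i.e. (P6 + 2·N1 − G)/2 ≤ (4·N2 + 5·P6)/9, where N1 = ((√a+√b)/2)², N2 = ((√a+√b)/2)·√((a+b)/2), G = √(ab), and P6 = (a²+b²)/(a+b). -/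
theorem stmt_17 (a b : ℝ) (ha : 0 < a) (hb : 0 < b) :
    let N1 := ((Real.sqrt a + Real.sqrt b)/2)^2
    let P6 := (a^2+b^2)/(a+b)
    let G := Real.sqrt (a*b)
    let N2 := ((Real.sqrt a + Real.sqrt b)/2) * Real.sqrt ((a+b)/2)
    18*N1 - P6 - 9*G - 8*N2 ≥ 0 := by
  intro N1 P6 G N2
  have ha2 : Real.sqrt a ^ 2 = a := Real.sq_sqrt ha.le
  have hb2 : Real.sqrt b ^ 2 = b := Real.sq_sqrt hb.le
  have hg : Real.sqrt (a*b) = Real.sqrt a * Real.sqrt b := Real.sqrt_mul ha.le b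
  have hm2 : Real.sqrt ((a+b)/2) ^ 2 = (a+b)/2 := Real.sq_sqrt (by positivity)
  have hx : 0 ≤ Real.sqrt a := Real.sqrt_nonneg a
  have hy : 0 ≤ Real.sqrt b := Real.sqrt_nonneg b
  have hm : 0 ≤ Real.sqrt ((a+b)/2) := Real.sqrt_nonneg _
  set x := Real.sqrt a
  set y := Real.sqrt b
  set m := Real.sqrt ((a+b)/2)
  have hab : (0:ℝ) < a + b := by linarith
  have hxy : (x*y)^2 = a*b := by rw [mul_pow, ha2, hb2]
  have hLnn : 0 ≤ 9*(a+b)/2 - (a^2+b^2)/(a+b) := by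
    rw [sub_nonneg, div_le_iff₀ hab]
    nlinarith [sq_nonneg (a-b), sq_nonneg (a+b)]
  have hL : 9*(a+b)/2 - (a^2+b^2)/(a+b) = (7*(a+b)^2/2 + 2*(x*y)^2)/(a+b) := by
    field_simp
    linear_combination (-4) * hxy
  have key : 4*(x+y)*m ≤ 9*(a+b)/2 - (a^2+b^2)/(a+b) := by
    have e1 : (4*(x+y)*m)^2 = 8*(a+b+2*(x*y))*(a+b) := by
      linear_combination 16*(x+y)^2*hm2 + 8*(a+b)*ha2 + 8*(a+b)*hb2
    have h2 : (4*(x+y)*m)^2 ≤ (9*(a+b)/2 - (a^2+b^2)/(a+b))^2 := by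
      rw [hL, e1, div_pow, le_div_iff₀ (by positivity : (0:ℝ) < (a+b)^2)]
      have hprod : 0 ≤ (2*(x*y)-(a+b))^2 * (4*(x*y)^2+4*(x*y)*(a+b)+17*(a+b)^2) := by
        have h1 : 0 ≤ x*y := mul_nonneg hx hy
        nlinarith [sq_nonneg (2*(x*y)-(a+b)), sq_nonneg (x*y), sq_nonneg (a+b),
          mul_nonneg h1 hab.le]
      nlinarith [hprod]
    exact le_of_pow_le_pow_left₀ two_ne_zero hLnn h2
  have hmain : 18*((x+y)/2)^2 - (a^2+b^2)/(a+b) - 9*(x*y) - 8*((x+y)/2*m) ≥ 0 := by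
    nlinarith [key, ha2, hb2]
  show 18*((x+y)/2)^2 - (a^2+b^2)/(a+b) - 9*Real.sqrt (a*b) - 8*((x+y)/2*m) ≥ 0
  rw [hg]
  exact hmain
end

section
/- For all positive reals a and b, 2·S + 10·N1 − 3·P6 − 9·G ≥ 0, i.e. (P6 + 3·G)/4 ≤ (S + 5·N1)/6, where S = √((a²+b²)/2), N1 = ((√a+√b)/2)², G = √(ab), and P6 = (a²+b²)/(a+b). -/
theorem stmt_19 (a b : ℝ) (ha : 0 < a) (hb : 0 < b) :
    let S := Real.sqrt ((a^2+b^2)/2)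
    let N1 := ((Real.sqrt a + Real.sqrt b)/2)^2
    let P6 := (a^2+b^2)/(a+b)
    let G := Real.sqrt (a*b)
    2*S + 10*N1 - 3*P6 - 9*G ≥ 0 := by
  intro S N1 P6 G
  set x := Real.sqrt a with hxdef
  set y := Real.sqrt b with hydef
  have hx : 0 < x := Real.sqrt_pos.mpr ha
  have hy : 0 < y := Real.sqrt_pos.mpr hb
  have hx2 : x ^ 2 = a := Real.sq_sqrt ha.le
  have hy2 : y ^ 2 = b := Real.sq_sqrt hb.le
  have hG : G = x * y := by
    simp only [G, hxdef, hydef, Real.sqrt_mul ha.le]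
  have hs0 : 0 ≤ S := Real.sqrt_nonneg _
  have hs2 : S ^ 2 = (x ^ 4 + y ^ 4) / 2 := by
    have h : S ^ 2 = (a ^ 2 + b ^ 2) / 2 := Real.sq_sqrt (by positivity)
    rw [h, ← hx2, ← hy2]; ring
  have ht : (0:ℝ) < x ^ 2 + y ^ 2 := by positivity
  have hP6 : P6 = (x ^ 4 + y ^ 4) / (x ^ 2 + y ^ 2) := by
    simp only [P6, ← hx2, ← hy2]; ring_nf
  -- key polynomial inequality
  have hQ : 0 ≤ 7*x^4 + 12*x^3*y - 22*x^2*y^2 + 12*x*y^3 + 7*y^4 := by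
    nlinarith [sq_nonneg (x^2 - y^2), mul_pos hx hy, sq_nonneg (x - y),
      mul_pos (mul_pos hx hy) (mul_pos hx hy)]
  have hD : (x^4 + y^4 + 8*x^3*y + 8*x*y^3 - 10*x^2*y^2)^2
      ≤ 8 * (x^4 + y^4) * (x^2 + y^2)^2 := by
    have h4 : (0:ℝ) ≤ (x - y)^4 := by positivity
    nlinarith [mul_nonneg h4 hQ]
  have key : x^4 + y^4 + 8*x^3*y + 8*x*y^3 - 10*x^2*y^2 ≤ 4 * S * (x^2 + y^2) := by
    have h16 : (x^4 + y^4 + 8*x^3*y + 8*x*y^3 - 10*x^2*y^2)^2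
        ≤ (4 * S * (x^2 + y^2))^2 := by
      have h : (4 * S * (x^2 + y^2))^2 = 16 * S^2 * (x^2+y^2)^2 := by ring
      rw [h, hs2]
      calc (x^4 + y^4 + 8*x^3*y + 8*x*y^3 - 10*x^2*y^2)^2
          ≤ 8 * (x^4 + y^4) * (x^2 + y^2)^2 := hD
        _ = 16 * ((x^4+y^4)/2) * (x^2+y^2)^2 := by ring
    have h4st : 0 ≤ 4 * S * (x^2 + y^2) := by positivity
    nlinarith [h16, h4st]
  have hN1 : N1 = ((x + y)/2)^2 := rfl
  rw [hN1, hP6, hG, ge_iff_le]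
  have heq : 2*S + 10*((x + y)/2)^2 - 3*((x^4+y^4)/(x^2+y^2)) - 9*(x*y)
      = (4 * S * (x^2+y^2) + 5*(x+y)^2*(x^2+y^2) - 6*(x^4+y^4) - 18*(x*y)*(x^2+y^2)) / (2*(x^2+y^2)) := by
    field_simp; ring
  rw [heq]
  apply div_nonneg _ (by positivity)
  nlinarith [key]
end
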